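/- arXiv:2307.11281 — 8 statements merged into one kernel-verified Lean document; each statement's English description precedes it below -/
import Mathlib

section
/- Let C ⊆ ℝ^d be nonempty, closed and convex, F : ℝ^d → ℝ^d any map, and z ∈ C. Then for every ζ ∈ N_C(z) one has ‖z − P_C[z − F(z)]‖ ≤ ‖F(z) + ζ‖; consequently the natural residual is bounded by the tangent residual: Res(z) ≤ r(z). -/
open Filter Topology
open scoped RealInnerProductSpace

/-- The normal cone of a set `C` at a point `z`; empty when `z ∉ C`. -/
def normalCone {d : ℕ} (C : Set (EuclideanSpace ℝ (Fin d)))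
    (z : EuclideanSpace ℝ (Fin d)) : Set (EuclideanSpace ℝ (Fin d)) :=
  {w | z ∈ C ∧ ∀ v ∈ C, ⟪v - z, w⟫ ≤ 0}

theorem natural_residual_le_tangent_residual
    {d : ℕ} (C : Set (EuclideanSpace ℝ (Fin d)))
    (hCne : C.Nonempty) (hCcl : IsClosed C) (hCcv : Convex ℝ C)
    (F : EuclideanSpace ℝ (Fin d) → EuclideanSpace ℝ (Fin d))
    (proj : EuclideanSpace ℝ (Fin d) → EuclideanSpace ℝ (Fin d))
    (hproj : ∀ x, proj x ∈ C ∧ ∀ y ∈ C, ‖x - proj x‖ ≤ ‖x - y‖)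
    (z : EuclideanSpace ℝ (Fin d)) (hz : z ∈ C)
    :
    (∀ ζ ∈ normalCone C z, ‖z - proj (z - F z)‖ ≤ ‖F z + ζ‖) ∧
    ‖z - proj (z - F z)‖ ≤ sInf ((fun ζ => ‖F z + ζ‖) '' normalCone C z) := by
  obtain ⟨hpC, hpmin⟩ := hproj (z - F z)
  set u : EuclideanSpace ℝ (Fin d) := z - F z with hu
  set p : EuclideanSpace ℝ (Fin d) := proj u with hp
  haveI : Nonempty C := hCne.to_subtype
  have hiInf : ‖u - p‖ = ⨅ w : C, ‖u - (w : EuclideanSpace ℝ (Fin d))‖ := by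
    apply le_antisymm
    · exact le_ciInf fun w => hpmin w w.2
    · exact ciInf_le ⟨0, fun x ⟨w, hw⟩ => hw ▸ norm_nonneg _⟩ (⟨p, hpC⟩ : C)
  have hchar : ∀ w ∈ C, ⟪u - p, w - p⟫ ≤ 0 :=
    (norm_eq_iInf_iff_real_inner_le_zero hCcv hpC).mp hiInf
  have key : ∀ ζ ∈ normalCone C z, ‖z - p‖ ≤ ‖F z + ζ‖ := by
    intro ζ hζ
    have h1 : ⟪u - p, z - p⟫ ≤ 0 := hchar z hz
    have h2 : ⟪p - z, ζ⟫ ≤ 0 := hζ.2 p hpC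
    have hsq : ‖z - p‖ * ‖z - p‖ ≤ ⟪F z + ζ, z - p⟫ := by
      have e1 : ⟪u - p, z - p⟫ = ⟪z - p, z - p⟫ - ⟪F z, z - p⟫ := by
        rw [hu]
        have : z - F z - p = (z - p) - F z := by abel
        rw [this, inner_sub_left]
      have e2 : ⟪p - z, ζ⟫ = -⟪ζ, z - p⟫ := by
        rw [← neg_sub z p, inner_neg_left, real_inner_comm]
      have := real_inner_self_eq_norm_mul_norm (z - p)
      rw [inner_add_left]
      nlinarith [h1, h2, e1, e2, this]
    have hCS : ⟪F z + ζ, z - p⟫ ≤ ‖F z + ζ‖ * ‖z - p‖ := real_inner_le_norm _ _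
    rcases eq_or_lt_of_le (norm_nonneg (z - p)) with h0 | h0
    · rw [← h0]; exact norm_nonneg _
    · exact le_of_mul_le_mul_right (le_trans hsq hCS) h0
  refine ⟨key, ?_⟩
  have h0mem : (0 : EuclideanSpace ℝ (Fin d)) ∈ normalCone C z :=
    ⟨hz, fun v hv => by simp⟩
  apply le_csInf (Set.Nonempty.image _ ⟨0, h0mem⟩)
  rintro b ⟨ζ, hζ, rfl⟩
  exact key ζ hζ
end

section
/- Let a ≥ 1 be a real number and (q_k)_{k≥1} be a bounded sequence in ℝ^d such that q_{k+1} + (k/a)(q_{k+1} − q_k) converges to some p ∈ ℝ^d as k → +∞. Then q_k converges to p. -/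
open Filter Topology Finset
open scoped RealInnerProductSpace

theorem limit_of_perturbed_sequence
    {d : ℕ} (a : ℝ) (ha : 1 ≤ a) (q : ℕ → EuclideanSpace ℝ (Fin d))
    (hbdd : ∃ M : ℝ, ∀ k : ℕ, 1 ≤ k → ‖q k‖ ≤ M)
    (p : EuclideanSpace ℝ (Fin d))
    (hlim : Tendsto (fun k : ℕ => q (k + 1) + ((k : ℝ) / a) • (q (k + 1) - q k))
      atTop (𝓝 p))
    :
    Tendsto q atTop (𝓝 p) := by
  have ha0 : (0:ℝ) < a := lt_of_lt_of_le one_pos ha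
  set u : ℕ → EuclideanSpace ℝ (Fin d) :=
    fun k : ℕ => q (k + 1) + ((k : ℝ) / a) • (q (k + 1) - q k) with hu
  set c : ℕ → ℝ := fun k => ∏ j ∈ Finset.Ico 1 k, (((j:ℝ) + a) / j) with hc
  have hc0 : c 0 = 1 := by simp [hc]
  have hc1 : c 1 = 1 := by simp [hc]
  have hcrec : ∀ n : ℕ, 1 ≤ n → c (n + 1) = c n * (((n:ℝ) + a) / n) := by
    intro n hn
    simp only [hc]
    rw [Finset.prod_Ico_succ_top hn]
  -- c n ≥ n for n ≥ 1
  have hcge : ∀ n : ℕ, 1 ≤ n → (n : ℝ) ≤ c n := by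
    intro n hn
    induction n with
    | zero => omega
    | succ m ih =>
      rcases Nat.lt_or_ge m 1 with h | hm
      · interval_cases m
        simp [hc1]
      · have hmpos : (0:ℝ) < m := by exact_mod_cast hm
        have hcm := ih hm
        rw [hcrec m hm]
        push_cast
        rw [mul_div_assoc', le_div_iff₀ hmpos]
        nlinarith [hcm, ha, hmpos]
  have hcpos : ∀ n : ℕ, 1 ≤ n → (0:ℝ) < c n := fun n hn =>
    lt_of_lt_of_le (by exact_mod_cast hn) (hcge n hn)
  -- weights
  set w : ℕ → ℝ := fun k => c (k + 1) - c k with hw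
  have hw0 : w 0 = 0 := by simp [hw, hc0, hc1]
  have hwnonneg : ∀ k, 0 ≤ w k := by
    intro k
    rcases Nat.lt_or_ge k 1 with h | hk
    · interval_cases k; simp [hw0]
    · have hkpos : (0:ℝ) < k := by exact_mod_cast hk
      have := hcpos k hk
      simp only [hw, hcrec k hk]
      rw [mul_div_assoc', sub_nonneg, le_div_iff₀ hkpos]
      nlinarith
  -- the key scalar facts
  have hwk : ∀ k : ℕ, 1 ≤ k → w k * ((k : ℝ) / a) = c k := by
    intro k hk
    have hkpos : (0:ℝ) < k := by exact_mod_cast hk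
    simp only [hw, hcrec k hk]
    field_simp
    ring
  -- telescoping identity
  have hkey : ∀ n : ℕ, 1 ≤ n →
      c (n + 1) • q (n + 1) = c n • q n + w n • u n := by
    intro n hn
    have h1 : w n + c n = c (n + 1) := by simp [hw]
    have h2 := hwk n hn
    simp only [hu]
    rw [smul_add, smul_smul, h2, smul_sub]
    rw [← h1]
    module
  have htel : ∀ n : ℕ, 1 ≤ n →
      c n • q n = q 1 + ∑ k ∈ Finset.range n, w k • u k := by
    intro n hn
    induction n with
    | zero => omega
    | succ m ih =>
      rcases Nat.lt_or_ge m 1 with h | hm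
      · interval_cases m
        simp [hc1, hw0]
      · rw [Finset.sum_range_succ, ← add_assoc, ← ih hm, hkey m hm]
  -- v tends to zero
  have hv : Tendsto (fun k => u k - p) atTop (𝓝 0) :=
    tendsto_sub_nhds_zero_iff.2 hlim
  -- S =o W
  have hlo : (fun k => w k • (u k - p)) =o[atTop] w := by
    have h := (Asymptotics.isBigO_refl w atTop).smul_isLittleO
      ((Asymptotics.isLittleO_one_iff ℝ).2 hv)
    simpa using h
  have hWtop : Tendsto (fun n => ∑ i ∈ Finset.range n, w i) atTop atTop := by
    have hWc : ∀ n, ∑ i ∈ Finset.range n, w i = c n - 1 := by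
      intro n
      rw [show (1:ℝ) = c 0 from hc0.symm]
      exact Finset.sum_range_sub c n
    have hlow : Tendsto (fun n : ℕ => (n:ℝ) + (-1)) atTop atTop :=
      tendsto_atTop_add_const_right atTop (-1) (tendsto_natCast_atTop_atTop (R := ℝ))
    refine tendsto_atTop_mono' atTop ?_ hlow
    filter_upwards [Ici_mem_atTop 1] with n hn
    rw [hWc]
    have := hcge n hn
    linarith
  have hS := hlo.sum_range hwnonneg hWtop
  have hratio : Tendsto
      (fun n => ‖∑ i ∈ Finset.range n, w i • (u i - p)‖ / ∑ i ∈ Finset.range n, w i)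
      atTop (𝓝 0) := hS.norm_left.tendsto_div_nhds_zero
  -- final squeeze
  rw [tendsto_iff_norm_sub_tendsto_zero]
  have hctop : Tendsto c atTop atTop := by
    apply tendsto_atTop_mono' _ _ tendsto_natCast_atTop_atTop
    filter_upwards [Ici_mem_atTop 1] with n hn using hcge n hn
  have hterm1 : Tendsto (fun n => ‖q 1 - p‖ / c n) atTop (𝓝 0) :=
    tendsto_const_nhds.div_atTop hctop
  have hbound : Tendsto (fun n => ‖q 1 - p‖ / c n +
      ‖∑ i ∈ Finset.range n, w i • (u i - p)‖ / ∑ i ∈ Finset.range n, w i)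
      atTop (𝓝 0) := by
    simpa using hterm1.add hratio
  apply squeeze_zero' (Eventually.of_forall fun n => norm_nonneg _) _ hbound
  filter_upwards [Ici_mem_atTop 2] with n hn
  have hn1 : 1 ≤ n := le_trans one_le_two hn
  have hcn := hcpos n hn1
  have hWc : ∑ i ∈ Finset.range n, w i = c n - 1 := by
    rw [show (1:ℝ) = c 0 from hc0.symm]
    exact Finset.sum_range_sub c n
  have hWpos : 0 < ∑ i ∈ Finset.range n, w i := by
    rw [hWc]
    have := hcge n hn1
    have : (2:ℝ) ≤ (n:ℝ) := by exact_mod_cast hn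
    linarith [hcge n hn1]
  -- q n - p = (c n)⁻¹ • (q 1 - p + S n)
  have hqn : q n - p = (c n)⁻¹ •
      (q 1 - p + ∑ i ∈ Finset.range n, w i • (u i - p)) := by
    have hsum : ∑ i ∈ Finset.range n, w i • u i =
        (∑ i ∈ Finset.range n, w i • (u i - p)) + (c n - 1) • p := by
      rw [← hWc, Finset.sum_smul, ← Finset.sum_add_distrib]
      apply Finset.sum_congr rfl
      intro i _
      rw [← smul_add, sub_add_cancel]
    have h := htel n hn1
    rw [hsum] at h
    have h2 : c n • (q n - p) = q 1 - p + ∑ i ∈ Finset.range n, w i • (u i - p) := by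
      rw [smul_sub, h]
      module
    rw [← h2, smul_smul, inv_mul_cancel₀ hcn.ne', one_smul]
  rw [hqn]
  rw [norm_smul]
  have h1 : ‖(c n)⁻¹‖ = (c n)⁻¹ := by
    rw [Real.norm_eq_abs, abs_of_pos (by positivity)]
  rw [h1]
  calc (c n)⁻¹ * ‖q 1 - p + ∑ i ∈ Finset.range n, w i • (u i - p)‖
      ≤ (c n)⁻¹ * (‖q 1 - p‖ + ‖∑ i ∈ Finset.range n, w i • (u i - p)‖) := by
        gcongr
        exact norm_add_le _ _
    _ ≤ ‖q 1 - p‖ / c n + ‖∑ i ∈ Finset.range n, w i • (u i - p)‖ / ∑ i ∈ Finset.range n, w i := by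
        rw [mul_add]
        gcongr
        · rw [inv_mul_eq_div]
        · rw [inv_mul_eq_div]
          apply div_le_div_of_nonneg_left (norm_nonneg _) hWpos
          rw [hWc]; linarith
end

section
/- Let (a_k)_{k≥1}, (b_k)_{k≥1}, (d_k)_{k≥1} be sequences of real numbers such that (a_k) is bounded from below, (b_k) and (d_k) are nonnegative, ∑_{k≥1} d_k < +∞, and a_{k+1} ≤ (1 + d_k)a_k − b_k for every k ≥ 1. Then (i) ∑_{k≥1} b_k < +∞, and (ii) the sequence (a_k) converges to a real number. -/
open Filter Topology
open scoped RealInnerProductSpace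

theorem quasi_fejer_real_sequences
    (a b e : ℕ → ℝ)
    (hbdd : ∃ m : ℝ, ∀ k : ℕ, 1 ≤ k → m ≤ a k)
    (hb : ∀ k : ℕ, 1 ≤ k → 0 ≤ b k) (he : ∀ k : ℕ, 1 ≤ k → 0 ≤ e k)
    (hesum : Summable e)
    (hrec : ∀ k : ℕ, 1 ≤ k → a (k + 1) ≤ (1 + e k) * a k - b k)
    :
    Summable b ∧ ∃ l : ℝ, Tendsto a atTop (𝓝 l) := by
  obtain ⟨m, hm⟩ := hbdd
  have habs : Summable (fun k => |e k|) := hesum.abs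
  set E : ℝ := ∑' k, |e k| with hE
  set P : ℕ → ℝ := fun k => ∏ j ∈ Finset.Ico 1 k, (1 + e j) with hPdef
  have hP1 : ∀ k, 1 ≤ k → 1 ≤ P k := by
    intro k hk
    simp only [hPdef]
    have h := Finset.prod_le_prod (s := Finset.Ico 1 k) (f := fun _ => (1:ℝ))
      (g := fun j => 1 + e j) (fun i _ => zero_le_one)
      (fun j hj => by have := he j (Finset.mem_Ico.mp hj).1; show (1:ℝ) ≤ 1 + e j; linarith)
    simpa using h
  have hPsucc : ∀ k, 1 ≤ k → P (k + 1) = P k * (1 + e k) := by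
    intro k hk
    exact Finset.prod_Ico_succ_top hk _
  have hPub : ∀ k, P k ≤ Real.exp E := by
    intro k
    calc P k ≤ ∏ j ∈ Finset.Ico 1 k, Real.exp (|e j|) := by
          apply Finset.prod_le_prod
          · intro j hj; have := he j (Finset.mem_Ico.mp hj).1; linarith
          · intro j _
            have h1 : e j ≤ |e j| := le_abs_self _
            have h2 := Real.add_one_le_exp (|e j|)
            linarith
      _ = Real.exp (∑ j ∈ Finset.Ico 1 k, |e j|) := (Real.exp_sum _ _).symm
      _ ≤ Real.exp E := by
          apply Real.exp_le_exp.mpr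
          exact Summable.sum_le_tsum _ (fun i _ => abs_nonneg _) habs
  have hPpos : ∀ k, 1 ≤ k → 0 < P k := fun k hk => lt_of_lt_of_le one_pos (hP1 k hk)
  set α : ℕ → ℝ := fun k => a k / P k with hαdef
  have hstep : ∀ k, 1 ≤ k → α (k + 1) + b k / P (k + 1) ≤ α k := by
    intro k hk
    have hpk := hPpos k hk
    have hpk1 := hPpos (k + 1) (by omega)
    have hrec' := hrec k hk
    have hek : 0 ≤ e k := he k hk
    simp only [hαdef]
    rw [← add_div, div_le_div_iff₀ hpk1 hpk, hPsucc k hk]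
    nlinarith [hpk.le]
  set m0 : ℝ := min m 0 with hm0
  have hlb : ∀ k, 1 ≤ k → m0 ≤ α k := by
    intro k hk
    have hpk := hPpos k hk
    rcases le_or_gt 0 (a k) with h | h
    · have : 0 ≤ α k := div_nonneg h hpk.le
      exact le_trans (min_le_right _ _) this
    · have h1 : a k ≤ a k / P k := by
        rw [le_div_iff₀ hpk]
        nlinarith [hP1 k hk]
      exact le_trans (min_le_left _ _) (le_trans (hm k hk) h1)
  -- β : shifted α
  set β : ℕ → ℝ := fun k => α (k + 1) with hβdef
  have hβanti : Antitone β := by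
    apply antitone_nat_of_succ_le
    intro n
    have h := hstep (n + 1) (by omega)
    have hbn : 0 ≤ b (n + 1) / P (n + 2) :=
      div_nonneg (hb (n + 1) (by omega)) (hPpos (n + 2) (by omega)).le
    simp only [hβdef]
    linarith
  have hβlb : ∀ k, m0 ≤ β k := fun k => hlb (k + 1) (by omega)
  -- summability of b
  have hcsum : Summable (fun k => b (k + 1) / P (k + 2)) := by
    apply summable_of_sum_range_le
      (c := β 0 - m0)
      (fun n => div_nonneg (hb (n + 1) (by omega)) (hPpos (n + 2) (by omega)).le)
    intro n
    have htel : ∑ i ∈ Finset.range n, (β i - β (i + 1)) = β 0 - β n :=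
      Finset.sum_range_sub' β n
    have hle : ∑ i ∈ Finset.range n, b (i + 1) / P (i + 2)
        ≤ ∑ i ∈ Finset.range n, (β i - β (i + 1)) := by
      apply Finset.sum_le_sum
      intro i _
      have h := hstep (i + 1) (by omega)
      simp only [hβdef]
      linarith
    have := hβlb n
    linarith [hle, htel.le, htel.ge]
  have hbsum : Summable b := by
    rw [← summable_nat_add_iff 1]
    refine Summable.of_nonneg_of_le (f := fun n => (b (n + 1) / P (n + 2)) * Real.exp E)
      (fun n => hb (n + 1) (by omega)) ?_ (hcsum.mul_right _)
    · intro n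
      have hp := hPpos (n + 2) (by omega)
      have h1 : b (n + 1) = (b (n + 1) / P (n + 2)) * P (n + 2) := by
        field_simp
      nth_rewrite 1 [h1]
      apply mul_le_mul_of_nonneg_left (hPub (n + 2))
      exact div_nonneg (hb (n + 1) (by omega)) hp.le
  refine ⟨hbsum, ?_⟩
  -- convergence of α (shifted): antitone bounded below
  have hβbdd : BddBelow (Set.range β) := ⟨m0, by rintro x ⟨k, rfl⟩; exact hβlb k⟩
  have hβconv : Tendsto β atTop (𝓝 (⨅ k, β k)) := tendsto_atTop_ciInf hβanti hβbdd
  -- convergence of P (shifted): monotone bounded above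
  set Q : ℕ → ℝ := fun k => P (k + 1) with hQdef
  have hQmono : Monotone Q := by
    apply monotone_nat_of_le_succ
    intro n
    have h := hPsucc (n + 1) (by omega)
    have he' := he (n + 1) (by omega)
    have hp := hPpos (n + 1) (by omega)
    simp only [hQdef]
    nlinarith
  have hQbdd : BddAbove (Set.range Q) := ⟨Real.exp E, by rintro x ⟨k, rfl⟩; exact hPub _⟩
  have hQconv : Tendsto Q atTop (𝓝 (⨆ k, Q k)) := tendsto_atTop_ciSup hQmono hQbdd
  refine ⟨(⨅ k, β k) * (⨆ k, Q k), ?_⟩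
  have ha : ∀ k, a (k + 1) = β k * Q k := by
    intro k
    have hp := hPpos (k + 1) (by omega)
    simp only [hβdef, hQdef, hαdef]
    field_simp
  rw [← tendsto_add_atTop_iff_nat 1]
  have : Tendsto (fun k => β k * Q k) atTop (𝓝 ((⨅ k, β k) * (⨆ k, Q k))) :=
    hβconv.mul hQconv
  exact this.congr (fun k => (ha k).symm)
end

section
/- (Opial's lemma in ℝ^d) Let S ⊆ ℝ^d be a nonempty set and (z_k)_{k≥1} a sequence in ℝ^d such that (i) for every z* ∈ S the limit lim_{k→∞} ‖z_k − z*‖ exists in ℝ, and (ii) every cluster point of (z_k) belongs to S. Then (z_k) converges to an element of S. -/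
open Filter Topology
open scoped RealInnerProductSpace

theorem opial_lemma
    {d : ℕ} (S : Set (EuclideanSpace ℝ (Fin d))) (hS : S.Nonempty)
    (z : ℕ → EuclideanSpace ℝ (Fin d))
    (h1 : ∀ zs ∈ S, ∃ l : ℝ, Tendsto (fun k : ℕ => ‖z k - zs‖) atTop (𝓝 l))
    (h2 : ∀ p : EuclideanSpace ℝ (Fin d),
      (∃ φ : ℕ → ℕ, StrictMono φ ∧ Tendsto (z ∘ φ) atTop (𝓝 p)) → p ∈ S)
    :
    ∃ p ∈ S, Tendsto z atTop (𝓝 p) := by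
  obtain ⟨zs, hzs⟩ := hS
  obtain ⟨l, hl⟩ := h1 zs hzs
  have hb : BddAbove (Set.range fun k : ℕ => ‖z k - zs‖) := hl.bddAbove_range
  obtain ⟨M, hM⟩ := hb
  have hrange : ∀ n, z n ∈ Metric.closedBall zs M := by
    intro n
    simp only [Metric.mem_closedBall, dist_eq_norm]
    exact hM ⟨n, rfl⟩
  obtain ⟨p, _, φ, hφ, hφt⟩ :=
    tendsto_subseq_of_bounded Metric.isBounded_closedBall hrange
  have hpS : p ∈ S := h2 p ⟨φ, hφ, hφt⟩
  obtain ⟨lp, hlp⟩ := h1 p hpS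
  have h0 : Tendsto (fun k : ℕ => ‖z (φ k) - p‖) atTop (𝓝 0) := by
    have := tendsto_iff_norm_sub_tendsto_zero.mp hφt
    simpa [Function.comp] using this
  have hsub : Tendsto (fun k : ℕ => ‖z (φ k) - p‖) atTop (𝓝 lp) :=
    hlp.comp hφ.tendsto_atTop
  have : lp = 0 := tendsto_nhds_unique hsub h0
  subst this
  exact ⟨p, hpS, tendsto_iff_norm_sub_tendsto_zero.mpr hlp⟩
end

section
/- Let the sequences (z_k), (w_k), (ζ_k) be generated by the fOGDA-VI algorithm and set v_k := F(w_{k−1}) + ζ_k. Then for every k ≥ 1 one has the identity (k + α)(z_{k+1} − z_k) − k(z_k − z_{k−1}) = −αγ v_{k+1} − 2γk(v_{k+1} − v_k). -/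
open Filter Topology
open scoped RealInnerProductSpace

theorem fOGDA_VI_combined_update_identity
    {d : ℕ} (F : EuclideanSpace ℝ (Fin d) → EuclideanSpace ℝ (Fin d))
    (C : Set (EuclideanSpace ℝ (Fin d)))
    (hCne : C.Nonempty) (hCcl : IsClosed C) (hCcv : Convex ℝ C)
    (L : ℝ) (hL : 0 < L)
    (hFmono : ∀ x y : EuclideanSpace ℝ (Fin d), 0 ≤ ⟪F x - F y, x - y⟫)
    (hFlip : ∀ x y : EuclideanSpace ℝ (Fin d), ‖F x - F y‖ ≤ L * ‖x - y‖)
    (proj : EuclideanSpace ℝ (Fin d) → EuclideanSpace ℝ (Fin d))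
    (hproj : ∀ x, proj x ∈ C ∧ ∀ y ∈ C, ‖x - proj x‖ ≤ ‖x - y‖)
    (α γ : ℝ) (hα : 2 < α) (hγ0 : 0 < γ) (hγ : γ < 1 / (4 * L))
    (z w ζ : ℕ → EuclideanSpace ℝ (Fin d))
    (hz1 : z 1 ∈ C) (hζ1 : ζ 1 ∈ normalCone C (z 1))
    (hw : ∀ k : ℕ, 1 ≤ k →
      w k = z k + (((k : ℝ)) / ((k : ℝ) + α)) • (z k - z (k - 1))
        - (γ * (α / ((k : ℝ) + α))) • (F (w (k - 1)) + ζ k))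
    (hzrec : ∀ k : ℕ, 1 ≤ k →
      z (k + 1) = proj (w k
        - (γ * (1 + (k : ℝ) / ((k : ℝ) + α))) • (F (w k) - F (w (k - 1)) - ζ k)))
    (hζrec : ∀ k : ℕ, 1 ≤ k →
      ζ (k + 1) = (((k : ℝ) + α) / (γ * (2 * (k : ℝ) + α))) • (w k - z (k + 1))
        - (F (w k) - F (w (k - 1)) - ζ k))
    (hζmem : ∀ k : ℕ, 1 ≤ k → ζ k ∈ normalCone C (z k))
    (hΩ : ∃ zstar ∈ C, ∀ v ∈ C, 0 ≤ ⟪F zstar, v - zstar⟫)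
    (v : ℕ → EuclideanSpace ℝ (Fin d)) (hv : ∀ k : ℕ, 1 ≤ k → v k = F (w (k - 1)) + ζ k)
    :
    ∀ k : ℕ, 1 ≤ k →
      ((k : ℝ) + α) • (z (k + 1) - z k) - (k : ℝ) • (z k - z (k - 1))
        = -(α * γ) • v (k + 1) - (2 * γ * (k : ℝ)) • (v (k + 1) - v k) := by
  intro k hk1
  have hk0 : (0:ℝ) ≤ (k:ℝ) := Nat.cast_nonneg k
  have hkα : ((k:ℝ) + α) ≠ 0 := by nlinarith
  have h2 : (γ * (2 * (k:ℝ) + α)) ≠ 0 := by nlinarith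
  have e1 : v (k+1) - v k = (((k : ℝ) + α) / (γ * (2 * (k : ℝ) + α))) • (w k - z (k + 1)) := by
    rw [hv (k+1) (by omega), hv k hk1, hζrec k hk1]
    simp only [Nat.add_sub_cancel]
    abel
  have e3 : z (k+1) = w k - ((γ*(2*(k:ℝ)+α))/((k:ℝ)+α)) • (v (k+1) - v k) := by
    rw [e1, smul_smul]
    have h : ((γ*(2*(k:ℝ)+α))/((k:ℝ)+α)) * (((k : ℝ) + α) / (γ * (2 * (k : ℝ) + α))) = 1 := by
      field_simp
    rw [h, one_smul]
    abel
  rw [e3, hw k hk1, ← hv k hk1]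
  match_scalars <;> field_simp <;> ring
end

section
/- Let the sequences (z_k), (w_k), (ζ_k) be generated by the fOGDA-VI algorithm and set v_k := F(w_{k−1}) + ζ_k. Then for every k ≥ 1: ζ_{k+1} + F(z_{k+1}) − v_{k+1} = F(z_{k+1}) − F(w_k), and ‖ζ_{k+1} + F(z_{k+1}) − v_{k+1}‖ ≤ L‖z_{k+1} − w_k‖ ≤ ‖v_{k+1} − v_k‖. -/
open Filter Topology
open scoped RealInnerProductSpace

theorem fOGDA_VI_lipschitz_estimate
    {d : ℕ} (F : EuclideanSpace ℝ (Fin d) → EuclideanSpace ℝ (Fin d))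
    (C : Set (EuclideanSpace ℝ (Fin d)))
    (hCne : C.Nonempty) (hCcl : IsClosed C) (hCcv : Convex ℝ C)
    (L : ℝ) (hL : 0 < L)
    (hFmono : ∀ x y : EuclideanSpace ℝ (Fin d), 0 ≤ ⟪F x - F y, x - y⟫)
    (hFlip : ∀ x y : EuclideanSpace ℝ (Fin d), ‖F x - F y‖ ≤ L * ‖x - y‖)
    (proj : EuclideanSpace ℝ (Fin d) → EuclideanSpace ℝ (Fin d))
    (hproj : ∀ x, proj x ∈ C ∧ ∀ y ∈ C, ‖x - proj x‖ ≤ ‖x - y‖)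
    (α γ : ℝ) (hα : 2 < α) (hγ0 : 0 < γ) (hγ : γ < 1 / (4 * L))
    (z w ζ : ℕ → EuclideanSpace ℝ (Fin d))
    (hz1 : z 1 ∈ C) (hζ1 : ζ 1 ∈ normalCone C (z 1))
    (hw : ∀ k : ℕ, 1 ≤ k →
      w k = z k + (((k : ℝ)) / ((k : ℝ) + α)) • (z k - z (k - 1))
        - (γ * (α / ((k : ℝ) + α))) • (F (w (k - 1)) + ζ k))
    (hzrec : ∀ k : ℕ, 1 ≤ k →
      z (k + 1) = proj (w k
        - (γ * (1 + (k : ℝ) / ((k : ℝ) + α))) • (F (w k) - F (w (k - 1)) - ζ k)))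
    (hζrec : ∀ k : ℕ, 1 ≤ k →
      ζ (k + 1) = (((k : ℝ) + α) / (γ * (2 * (k : ℝ) + α))) • (w k - z (k + 1))
        - (F (w k) - F (w (k - 1)) - ζ k))
    (hζmem : ∀ k : ℕ, 1 ≤ k → ζ k ∈ normalCone C (z k))
    (hΩ : ∃ zstar ∈ C, ∀ v ∈ C, 0 ≤ ⟪F zstar, v - zstar⟫)
    (v : ℕ → EuclideanSpace ℝ (Fin d)) (hv : ∀ k : ℕ, 1 ≤ k → v k = F (w (k - 1)) + ζ k)
    :
    ∀ k : ℕ, 1 ≤ k →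
      ζ (k + 1) + F (z (k + 1)) - v (k + 1) = F (z (k + 1)) - F (w k) ∧
      ‖ζ (k + 1) + F (z (k + 1)) - v (k + 1)‖ ≤ L * ‖z (k + 1) - w k‖ ∧
      L * ‖z (k + 1) - w k‖ ≤ ‖v (k + 1) - v k‖ := by
  intro k hk
  have hv1 : v (k + 1) = F (w k) + ζ (k + 1) := by
    have := hv (k + 1) (by omega)
    simpa using this
  have heq : ζ (k + 1) + F (z (k + 1)) - v (k + 1) = F (z (k + 1)) - F (w k) := by
    rw [hv1]; abel
  refine ⟨heq, ?_, ?_⟩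
  · rw [heq]; exact hFlip _ _
  · -- v(k+1) - v k = c • (w k - z (k+1)) with c = (k+α)/(γ(2k+α))
    set c : ℝ := ((k : ℝ) + α) / (γ * (2 * (k : ℝ) + α)) with hc
    have hvdiff : v (k + 1) - v k = c • (w k - z (k + 1)) := by
      rw [hv1, hv k hk, hζrec k hk]; abel
    have hkpos : (0:ℝ) ≤ (k : ℝ) := Nat.cast_nonneg k
    have hden : 0 < γ * (2 * (k : ℝ) + α) := by positivity
    have hLc : L ≤ c := by
      rw [hc, le_div_iff₀ hden]
      have h4 : 4 * L * γ < 1 := by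
        have := (lt_div_iff₀ (by positivity : (0:ℝ) < 4 * L)).mp hγ
        nlinarith
      nlinarith
    have hnorm : ‖v (k + 1) - v k‖ = c * ‖z (k + 1) - w k‖ := by
      rw [hvdiff, norm_smul, Real.norm_eq_abs,
        abs_of_pos (by positivity : (0:ℝ) < c), norm_sub_rev]
    rw [hnorm]
    exact mul_le_mul_of_nonneg_right hLc (norm_nonneg _)
end

section
/- Let z* ∈ Ω, let (z_k), (w_k), (ζ_k) be generated by the fOGDA-VI algorithm, v_k := F(w_{k−1}) + ζ_k, and let 0 ≤ λ ≤ α − 1. Then for every k ≥ 1 the following identity holds: E_{λ,k+1} − E_{λ,k} = −4(α−2)λγ⟨z_{k+1} − z*, v_{k+1}⟩ + 2(λ+1−α)(2k+α+1)‖z_{k+1} − z_k‖² + (2/(α−1))(4(α−1)(λ+1−α) − α(α−2))γk⟨z_{k+1} − z_k, v_{k+1}⟩ + (2/(α−1))(2α(α−1)(λ+1−α) + α − 2(α−1)²)γ⟨z_{k+1} − z_k, v_{k+1}⟩ − (2(α−2)/(α−1))γk(k+α)⟨z_{k+1} − z_k, v_{k+1} − v_k⟩ − ((α−2)/(α−1))γ²k(2k+α)‖v_{k+1}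 − v_k‖² − ((α−2)/(α−1))γ²(2(3α−2)k + 2α² + α − 2)‖v_{k+1}‖². -/
open Filter Topology
open scoped RealInnerProductSpace

set_option maxRecDepth 4000 in
set_option maxHeartbeats 2000000 in
theorem fOGDA_VI_energy_identity
    {d : ℕ} (F : EuclideanSpace ℝ (Fin d) → EuclideanSpace ℝ (Fin d))
    (C : Set (EuclideanSpace ℝ (Fin d)))
    (hCne : C.Nonempty) (hCcl : IsClosed C) (hCcv : Convex ℝ C)
    (L : ℝ) (hL : 0 < L)
    (hFmono : ∀ x y : EuclideanSpace ℝ (Fin d), 0 ≤ ⟪F x - F y, x - y⟫)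
    (hFlip : ∀ x y : EuclideanSpace ℝ (Fin d), ‖F x - F y‖ ≤ L * ‖x - y‖)
    (proj : EuclideanSpace ℝ (Fin d) → EuclideanSpace ℝ (Fin d))
    (hproj : ∀ x, proj x ∈ C ∧ ∀ y ∈ C, ‖x - proj x‖ ≤ ‖x - y‖)
    (α γ : ℝ) (hα : 2 < α) (hγ0 : 0 < γ) (hγ : γ < 1 / (4 * L))
    (z w ζ : ℕ → EuclideanSpace ℝ (Fin d))
    (hz1 : z 1 ∈ C) (hζ1 : ζ 1 ∈ normalCone C (z 1))
    (hw : ∀ k : ℕ, 1 ≤ k →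
      w k = z k + (((k : ℝ)) / ((k : ℝ) + α)) • (z k - z (k - 1))
        - (γ * (α / ((k : ℝ) + α))) • (F (w (k - 1)) + ζ k))
    (hzrec : ∀ k : ℕ, 1 ≤ k →
      z (k + 1) = proj (w k
        - (γ * (1 + (k : ℝ) / ((k : ℝ) + α))) • (F (w k) - F (w (k - 1)) - ζ k)))
    (hζrec : ∀ k : ℕ, 1 ≤ k →
      ζ (k + 1) = (((k : ℝ) + α) / (γ * (2 * (k : ℝ) + α))) • (w k - z (k + 1))
        - (F (w k) - F (w (k - 1)) - ζ k))
    (hζmem : ∀ k : ℕ, 1 ≤ k → ζ k ∈ normalCone C (z k))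
    (zs : EuclideanSpace ℝ (Fin d)) (hzs : zs ∈ C ∧ ∀ v ∈ C, 0 ≤ ⟪F zs, v - zs⟫)
    (v : ℕ → EuclideanSpace ℝ (Fin d)) (hv : ∀ k : ℕ, 1 ≤ k → v k = F (w (k - 1)) + ζ k)
    (lam : ℝ) (hlam0 : 0 ≤ lam) (hlam1 : lam ≤ α - 1)
    (En : ℕ → ℝ)
    (hEn : ∀ k : ℕ, 1 ≤ k → En k =
      (1 / 2) * ‖(2 * lam) • (z k - zs) + (2 * (k : ℝ)) • (z k - z (k - 1))
          + ((3 * α - 2) / (α - 1) * γ * (k : ℝ)) • v k‖ ^ 2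
        + 2 * lam * (α - 1 - lam) * ‖z k - zs‖ ^ 2
        + (2 * (α - 2) / (α - 1)) * lam * γ * (k : ℝ) * ⟪z k - zs, v k⟫
        + ((α - 2) / (α - 1)) * γ ^ 2 * (k : ℝ)
          * ((3 * α - 2) / (2 * (α - 1)) * (k : ℝ) + α) * ‖v k‖ ^ 2)
    :
    ∀ k : ℕ, 1 ≤ k →
      En (k + 1) - En k =
        -(4 * (α - 2) * lam * γ) * ⟪z (k + 1) - zs, v (k + 1)⟫
        + 2 * (lam + 1 - α) * (2 * (k : ℝ) + α + 1) * ‖z (k + 1) - z k‖ ^ 2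
        + (2 / (α - 1)) * (4 * (α - 1) * (lam + 1 - α) - α * (α - 2)) * γ * (k : ℝ)
          * ⟪z (k + 1) - z k, v (k + 1)⟫
        + (2 / (α - 1)) * (2 * α * (α - 1) * (lam + 1 - α) + α - 2 * (α - 1) ^ 2) * γ
          * ⟪z (k + 1) - z k, v (k + 1)⟫
        - (2 * (α - 2) / (α - 1)) * γ * (k : ℝ) * ((k : ℝ) + α)
          * ⟪z (k + 1) - z k, v (k + 1) - v k⟫
        - ((α - 2) / (α - 1)) * γ ^ 2 * (k : ℝ) * (2 * (k : ℝ) + α)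
          * ‖v (k + 1) - v k‖ ^ 2
        - ((α - 2) / (α - 1)) * γ ^ 2 * (2 * (3 * α - 2) * (k : ℝ) + 2 * α ^ 2 + α - 2)
          * ‖v (k + 1)‖ ^ 2 := by
  intro k hk
  have hk1 : (1:ℝ) ≤ (k:ℝ) := by exact_mod_cast hk
  have hk0 : (k:ℝ) ≠ 0 := by linarith
  have hka : ((k:ℝ) + α) ≠ 0 := by linarith
  have h2ka : (2*(k:ℝ) + α) ≠ 0 := by linarith
  have hγne : γ ≠ 0 := ne_of_gt hγ0
  have hα1 : α - 1 ≠ 0 := by linarith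
  have hv1 := hv k hk
  have hv2 := hv (k+1) (by omega)
  simp only [Nat.add_sub_cancel] at hv2
  have hw1 := hw k hk
  have hζ2 := hζrec k hk
  -- v(k+1) - v k = ((k+α)/(γ(2k+α))) • (w k - z (k+1))
  have h2 : v (k+1) - v k = (((k:ℝ)+α)/(γ*(2*(k:ℝ)+α))) • (w k - z (k+1)) := by
    rw [hv2, hv1, hζ2]; module
  have h3 : (γ*(2*(k:ℝ)+α)) • (v (k+1) - v k) = ((k:ℝ)+α) • (w k - z (k+1)) := by
    rw [h2, smul_smul]; congr 1; field_simp
  have h4 : ((k:ℝ)+α) • (w k - z k)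
      = (k:ℝ) • (z k - z (k-1)) - (γ*α) • v k := by
    rw [hw1, ← hv1]
    match_scalars <;> field_simp <;> ring
  have hkey : (k:ℝ) • (z k - z (k-1))
      = ((k:ℝ)+α) • (z (k+1) - z k) - (2*(k:ℝ)*γ) • v k
        + (γ*(2*(k:ℝ)+α)) • v (k+1) := by
    linear_combination (norm := module) -h3 - h4
  have h2kb : (2*(k:ℝ)) • (z k - z (k-1))
      = (2*((k:ℝ)+α)) • (z (k+1) - z k) - (4*(k:ℝ)*γ) • v k
        + (2*γ*(2*(k:ℝ)+α)) • v (k+1) := by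
    linear_combination (norm := module) (2:ℝ) • hkey
  have hzz : z k - zs = (z (k+1) - zs) - (z (k+1) - z k) := by abel
  rw [hEn (k+1) (by omega), hEn k hk]
  simp only [Nat.add_sub_cancel]
  push_cast
  rw [h2kb, hzz]
  set e := z (k+1) - zs with he
  set b := z (k+1) - z k with hb
  set p := v k with hp
  set q := v (k+1) with hq
  simp only [← real_inner_self_eq_norm_sq]
  simp only [inner_add_left, inner_add_right, inner_sub_left, inner_sub_right,
    real_inner_smul_left, real_inner_smul_right]
  simp only [real_inner_comm b e, real_inner_comm p e, real_inner_comm q e,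
    real_inner_comm p b, real_inner_comm q b, real_inner_comm q p]
  field_simp
  ring
end

section
/- For every α > 2 there exist real parameters 0 ≤ λ̲(α) < λ̄(α) ≤ (3α−2)/4 such that for every λ with λ̲(α) < λ < λ̄(α) there is an integer k_λ ≥ 1 with the property that for every k ≥ k_λ and for the sequences (z_k), (v_k) generated by the fOGDA-VI algorithm one has R_k := √((5α−2)/(2(3α−2)))·(η₂k + κ₀√k)·‖z_{k+1} − z_k‖² + 4γ(η₀k + η₁)⟨z_{k+1} − z_k, v_{k+1}⟩ + 4√((5α−2)/(2(3α−2)))·γ²(η₃k + κ₁√k)·‖v_{k+1}‖² ≤ 0. -/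
set_option maxHeartbeats 1000000

open Filter Topology
open scoped RealInnerProductSpace

lemma poly_bound (ε M N : ℝ) (hε : 0 < ε) (hM : 0 ≤ M) (hN : 0 ≤ N)
    (r : ℝ) (hr : 1 + (M + N)/ε ≤ r) : M * r^3 + N * r^2 ≤ ε * r^4 := by
  have hMN : 0 ≤ (M + N)/ε := by positivity
  have hr1 : 1 ≤ r := by linarith
  have h : M + N + ε ≤ ε * r := by
    have h2 := mul_le_mul_of_nonneg_left hr hε.le
    have h3 : ε * (1 + (M+N)/ε) = ε + (M + N) := by field_simp
    linarith
  have h4 : N + ε ≤ ε * r - M := by linarith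
  have h5 : ε ≤ ε * r^2 - M * r - N := by nlinarith
  nlinarith [mul_le_mul_of_nonneg_left h5 (sq_nonneg r), sq_nonneg r]

lemma quad_nonpos (X Y Z A V I : ℝ) (hX : X < 0) (hZ : Z ≤ 0) (hdisc : Y^2 ≤ 4*(X*Z))
    (hA : 0 ≤ A) (hV : 0 ≤ V) (hI1 : I ≤ A*V) (hI2 : -(A*V) ≤ I) :
    X*A^2 + Y*I + Z*V^2 ≤ 0 := by
  have hIabs : |I| ≤ A*V := abs_le.mpr ⟨by linarith, hI1⟩
  have hYI : Y*I ≤ |Y| * (A*V) := by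
    calc Y*I ≤ |Y*I| := le_abs_self _
    _ = |Y| * |I| := abs_mul _ _
    _ ≤ |Y| * (A*V) := mul_le_mul_of_nonneg_left hIabs (abs_nonneg Y)
  have hY2 : |Y|^2 = Y^2 := sq_abs Y
  have hkey : 0 ≤ 4*X*(X*A^2 + |Y| * (A*V) + Z*V^2) := by
    have h1 : 0 ≤ (2*X*A + |Y| * V)^2 := sq_nonneg _
    have h2 : 0 ≤ (4*(X*Z) - Y^2)*V^2 := mul_nonneg (by linarith) (sq_nonneg V)
    nlinarith [h1, h2]
  have hE : X*A^2 + |Y| * (A*V) + Z*V^2 ≤ 0 := by nlinarith [hkey]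
  linarith

lemma thresholds (s e0 e1 e2 e3 c0 c1 : ℝ) (hs : 0 < s) (he2 : e2 < 0) (he3 : e3 < 0)
    (hc0 : 0 ≤ c0) (hc1 : 0 ≤ c1) (hgap : e0^2 < s^2 * (e2 * e3)) :
    ∃ R : ℝ, 1 ≤ R ∧ ∀ r : ℝ, R ≤ r →
      e2*r^2 + c0*r < 0 ∧ e3*r^2 + c1*r ≤ 0 ∧
      (e0*r^2 + e1)^2 ≤ s^2 * ((e2*r^2 + c0*r) * (e3*r^2 + c1*r)) := by
  have hε : 0 < s^2 * (e2*e3) - e0^2 := sub_pos.mpr hgap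
  have hM : 0 ≤ -(s^2 * (e2*c1 + e3*c0)) := by
    nlinarith [mul_nonneg (sq_nonneg s) (mul_nonneg hc1 (neg_nonneg.mpr he2.le)),
      mul_nonneg (sq_nonneg s) (mul_nonneg hc0 (neg_nonneg.mpr he3.le))]
  have hN : 0 ≤ |s^2*(c0*c1) - 2*(e0*e1)| + e1^2 := by positivity
  have h1 : 0 ≤ (-(s^2 * (e2*c1 + e3*c0)) + (|s^2*(c0*c1) - 2*(e0*e1)| + e1^2)) / (s^2 * (e2*e3) - e0^2) :=
    div_nonneg (by linarith) hε.le
  have h2 : 0 ≤ c0/(-e2) := div_nonneg hc0 (by linarith)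
  have h3 : 0 ≤ c1/(-e3) := div_nonneg hc1 (by linarith)
  refine ⟨1 + (-(s^2 * (e2*c1 + e3*c0)) + (|s^2*(c0*c1) - 2*(e0*e1)| + e1^2)) / (s^2 * (e2*e3) - e0^2)
      + c0/(-e2) + c1/(-e3), by linarith, fun r hr => ?_⟩
  have hr1 : 1 ≤ r := by linarith
  have hr0 : 0 < r := by linarith
  have he2r : e2 * r + c0 ≤ e2 := by
    have := mul_le_mul_of_nonpos_left (show 1 + c0/(-e2) ≤ r by linarith) he2.le
    have heq : e2 * (1 + c0/(-e2)) = e2 - c0 := by field_simp [he2.ne]; ring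
    linarith
  have he3r : e3 * r + c1 ≤ e3 := by
    have := mul_le_mul_of_nonpos_left (show 1 + c1/(-e3) ≤ r by linarith) he3.le
    have heq : e3 * (1 + c1/(-e3)) = e3 - c1 := by field_simp [he3.ne]; ring
    linarith
  refine ⟨?_, ?_, ?_⟩
  · nlinarith [mul_lt_mul_of_pos_left (show e2*r + c0 < 0 by linarith) hr0]
  · nlinarith [mul_le_mul_of_nonneg_left (show e3*r + c1 ≤ 0 by linarith) hr0.le]
  · have key := poly_bound (s^2 * (e2*e3) - e0^2) (-(s^2 * (e2*c1 + e3*c0)))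
      (|s^2*(c0*c1) - 2*(e0*e1)| + e1^2) hε hM hN r (by linarith)
    have hP1 : -|s^2*(c0*c1) - 2*(e0*e1)| * r^2 ≤ (s^2*(c0*c1) - 2*(e0*e1)) * r^2 :=
      mul_le_mul_of_nonneg_right (neg_abs_le _) (sq_nonneg r)
    have hP2 : e1^2 ≤ e1^2 * r^2 := by
      nlinarith [mul_nonneg (sq_nonneg e1) (show (0:ℝ) ≤ r^2 - 1 by nlinarith)]
    nlinarith [key, hP1, hP2]

lemma lam_range (α : ℝ) (hα : 2 < α) :
    ∃ lamlo lamhi : ℝ, 0 ≤ lamlo ∧ lamlo < lamhi ∧ lamhi ≤ (3*α-2)/4 ∧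
      ∀ lam : ℝ, lamlo < lam → lam < lamhi →
        4*(lam+1-α) < 0 ∧
        ((4*(α-1)*(lam+1-α) - α*(α-2))/(2*(α-1)))^2
          < ((5*α-2)/(2*(3*α-2))) * ((4*(lam+1-α)) * ((-((α-2)*(3*α-2)))/(2*(α-1)))) := by
  have hα1 : (0:ℝ) < α - 1 := by linarith
  have hα2 : (0:ℝ) < α - 2 := by linarith
  have h3a : (0:ℝ) < 3*α - 2 := by linarith
  have h5a : (0:ℝ) < 5*α - 2 := by linarith
  set B : ℝ := (α-2)*(3*α-2)/(α-1) with hB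
  set c : ℝ := α*(α-2)/(2*(α-1)) with hc
  set D : ℝ := (α-2)^3*(5*α-2)/(α-1)^2 with hD
  have hDpos : 0 < D := by rw [hD]; positivity
  set sD : ℝ := Real.sqrt D with hsD
  have hsDpos : 0 < sD := Real.sqrt_pos.mpr hDpos
  have hsD2 : sD^2 = D := Real.sq_sqrt hDpos.le
  have hBD : D = B^2 - 16*c^2 := by
    rw [hD, hB, hc]; field_simp; ring
  have hBlt : B < 8*(α-1) := by
    rw [hB, div_lt_iff₀ hα1]; nlinarith
  have hcpos : 0 < c := by rw [hc]; positivity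
  have h2B : 2*(α-2) < B := by
    rw [hB, lt_div_iff₀ hα1]; nlinarith
  have hid : (8*(α-1) - B)^2 = D + 16*(α^2 + c^2) := by
    rw [hD, hB, hc]; field_simp; ring
  have hsDle : sD ≤ 8*(α-1) - B := by
    rw [hsD]
    calc Real.sqrt D ≤ Real.sqrt ((8*(α-1) - B)^2) := by
          apply Real.sqrt_le_sqrt; nlinarith [sq_nonneg α, sq_nonneg c]
      _ = 8*(α-1) - B := Real.sqrt_sq (by linarith)
  refine ⟨α - 1 - (B+sD)/8, α - 1 - max ((B-sD)/8) ((α-2)/4), by linarith, ?_, ?_, ?_⟩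
  · have h1 : (B-sD)/8 < (B+sD)/8 := by linarith
    have h2 : (α-2)/4 < (B+sD)/8 := by linarith
    have := max_lt h1 h2
    linarith
  · have := le_max_right ((B-sD)/8) ((α-2)/4)
    linarith
  · intro lam hlo hhi
    set t : ℝ := α - 1 - lam with ht
    have ht1 : t < (B+sD)/8 := by rw [ht]; linarith
    have ht2 : max ((B-sD)/8) ((α-2)/4) < t := by rw [ht]; linarith
    have ht3 : (B-sD)/8 < t := lt_of_le_of_lt (le_max_left _ _) ht2
    have ht4 : (α-2)/4 < t := lt_of_le_of_lt (le_max_right _ _) ht2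
    have ht0 : 0 < t := by linarith
    have habs : (8*t - B)^2 < sD^2 := sq_lt_sq' (by linarith) (by linarith)
    have hq : 4*t^2 - B*t + c^2 < 0 := by nlinarith [habs, hsD2, hBD]
    constructor
    · linarith
    · have hlam : lam + 1 - α = -t := by rw [ht]; ring
      have hE0 : (4*(α-1)*(lam+1-α) - α*(α-2))/(2*(α-1)) = -(2*t + c) := by
        rw [hlam, hc]; field_simp; ring
      have hR : ((5*α-2)/(2*(3*α-2))) * ((4*(lam+1-α)) * ((-((α-2)*(3*α-2)))/(2*(α-1)))) = t * ((α-2)*(5*α-2)/(α-1)) := by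
        rw [hlam]; field_simp [hα1.ne', h3a.ne']; ring_nf; field_simp [show (-2 + α*3) ≠ 0 by intro h; linarith]; ring
      have hBc : (α-2)*(5*α-2)/(α-1) = B + 4*c := by
        rw [hB, hc]; field_simp; ring
      rw [hE0, hR, hBc]
      have e1 : (-(2*t+c))^2 = 4*t^2 + 4*(t*c) + c^2 := by ring
      have e2 : t*(B+4*c) = B*t + 4*(t*c) := by ring
      rw [e1, e2]
      linarith [hq]

theorem fOGDA_VI_Rk_nonpositive
    {d : ℕ} (F : EuclideanSpace ℝ (Fin d) → EuclideanSpace ℝ (Fin d))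
    (C : Set (EuclideanSpace ℝ (Fin d)))
    (hCne : C.Nonempty) (hCcl : IsClosed C) (hCcv : Convex ℝ C)
    (L : ℝ) (hL : 0 < L)
    (hFmono : ∀ x y : EuclideanSpace ℝ (Fin d), 0 ≤ ⟪F x - F y, x - y⟫)
    (hFlip : ∀ x y : EuclideanSpace ℝ (Fin d), ‖F x - F y‖ ≤ L * ‖x - y‖)
    (proj : EuclideanSpace ℝ (Fin d) → EuclideanSpace ℝ (Fin d))
    (hproj : ∀ x, proj x ∈ C ∧ ∀ y ∈ C, ‖x - proj x‖ ≤ ‖x - y‖)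
    (α γ : ℝ) (hα : 2 < α) (hγ0 : 0 < γ) (hγ : γ < 1 / (4 * L))
    (z w ζ : ℕ → EuclideanSpace ℝ (Fin d))
    (hz1 : z 1 ∈ C) (hζ1 : ζ 1 ∈ normalCone C (z 1))
    (hw : ∀ k : ℕ, 1 ≤ k →
      w k = z k + (((k : ℝ)) / ((k : ℝ) + α)) • (z k - z (k - 1))
        - (γ * (α / ((k : ℝ) + α))) • (F (w (k - 1)) + ζ k))
    (hzrec : ∀ k : ℕ, 1 ≤ k →
      z (k + 1) = proj (w k
        - (γ * (1 + (k : ℝ) / ((k : ℝ) + α))) • (F (w k) - F (w (k - 1)) - ζ k)))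
    (hζrec : ∀ k : ℕ, 1 ≤ k →
      ζ (k + 1) = (((k : ℝ) + α) / (γ * (2 * (k : ℝ) + α))) • (w k - z (k + 1))
        - (F (w k) - F (w (k - 1)) - ζ k))
    (hζmem : ∀ k : ℕ, 1 ≤ k → ζ k ∈ normalCone C (z k))
    (hΩ : ∃ zstar ∈ C, ∀ v ∈ C, 0 ≤ ⟪F zstar, v - zstar⟫)
    (v : ℕ → EuclideanSpace ℝ (Fin d)) (hv : ∀ k : ℕ, 1 ≤ k → v k = F (w (k - 1)) + ζ k)
    :
    ∃ lamlo lamhi : ℝ, 0 ≤ lamlo ∧ lamlo < lamhi ∧ lamhi ≤ (3 * α - 2) / 4 ∧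
      ∀ lam : ℝ, lamlo < lam → lam < lamhi →
        ∃ klam : ℕ, 1 ≤ klam ∧ ∀ k : ℕ, klam ≤ k →
          Real.sqrt ((5 * α - 2) / (2 * (3 * α - 2)))
              * ((4 * (lam + 1 - α)) * (k : ℝ)
                + ((α - 2) * Real.sqrt (α - 2) / (α - 1)) * Real.sqrt (k : ℝ))
              * ‖z (k + 1) - z k‖ ^ 2
            + 4 * γ * (((4 * (α - 1) * (lam + 1 - α) - α * (α - 2)) / (2 * (α - 1))) * (k : ℝ)
                + ((2 * α * (α - 1) * (lam + 1 - α) + α - 2 * (α - 1) ^ 2) / (2 * (α - 1))))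
              * ⟪z (k + 1) - z k, v (k + 1)⟫
            + 4 * Real.sqrt ((5 * α - 2) / (2 * (3 * α - 2))) * γ ^ 2
              * ((-((α - 2) * (3 * α - 2)) / (2 * (α - 1))) * (k : ℝ)
                + ((α - 2) * α / (4 * (α - 1))) * Real.sqrt (k : ℝ))
              * ‖v (k + 1)‖ ^ 2
          ≤ 0 := by
  have hα1 : (0:ℝ) < α - 1 := by linarith
  have hα2 : (0:ℝ) < α - 2 := by linarith
  have h3a : (0:ℝ) < 3*α - 2 := by linarith
  have h5a : (0:ℝ) < 5*α - 2 := by linarith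
  obtain ⟨lamlo, lamhi, hll0, hlllt, hllhi, hmain⟩ := lam_range α hα
  refine ⟨lamlo, lamhi, hll0, by linarith [hlllt], by linarith [hllhi], ?_⟩
  intro lam h1 h2
  obtain ⟨he2neg, hgap⟩ := hmain lam h1 h2
  set s : ℝ := Real.sqrt ((5 * α - 2) / (2 * (3 * α - 2))) with hs_def
  have hspos : 0 < s := Real.sqrt_pos.mpr (by positivity)
  have hs2 : s^2 = (5*α-2)/(2*(3*α-2)) := Real.sq_sqrt (by positivity)
  have he3 : (-((α-2)*(3*α-2)))/(2*(α-1)) < 0 :=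
    div_neg_of_neg_of_pos (by nlinarith) (by linarith)
  have hc0 : 0 ≤ (α-2)*Real.sqrt (α-2)/(α-1) := by positivity
  have hc1 : 0 ≤ (α-2)*α/(4*(α-1)) := by positivity
  obtain ⟨R, hR1, hRprop⟩ := thresholds s
    ((4*(α-1)*(lam+1-α) - α*(α-2))/(2*(α-1)))
    ((2*α*(α-1)*(lam+1-α) + α - 2*(α-1)^2)/(2*(α-1)))
    (4*(lam+1-α)) ((-((α-2)*(3*α-2)))/(2*(α-1)))
    ((α-2)*Real.sqrt (α-2)/(α-1)) ((α-2)*α/(4*(α-1)))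
    hspos he2neg he3 hc0 hc1 (by rw [hs2]; exact hgap)
  refine ⟨max 1 (Nat.ceil (R^2)), le_max_left _ _, ?_⟩
  intro k hk
  have hkR : R^2 ≤ (k:ℝ) := by
    have h := Nat.le_ceil (R^2)
    have h' : ((Nat.ceil (R^2) : ℕ) : ℝ) ≤ (k:ℝ) :=
      Nat.cast_le.mpr (le_trans (le_max_right _ _) hk)
    linarith
  have hrR : R ≤ Real.sqrt (k:ℝ) := by
    have hh : R = Real.sqrt (R^2) := (Real.sqrt_sq (by linarith)).symm
    rw [hh]; exact Real.sqrt_le_sqrt hkR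
  have hk2 : ((k:ℝ)) = (Real.sqrt (k:ℝ))^2 := (Real.sq_sqrt (Nat.cast_nonneg k)).symm
  obtain ⟨hX, hZ, hdisc⟩ := hRprop (Real.sqrt (k:ℝ)) hrR
  set r : ℝ := Real.sqrt (k:ℝ) with hr_def
  rw [hk2]
  have hXlt : s * ((4*(lam+1-α))*r^2 + ((α-2)*Real.sqrt (α-2)/(α-1))*r) < 0 :=
    mul_neg_of_pos_of_neg hspos hX
  have hZle : 4*s*γ^2*(((-((α-2)*(3*α-2)))/(2*(α-1)))*r^2 + ((α-2)*α/(4*(α-1)))*r) ≤ 0 :=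
    mul_nonpos_of_nonneg_of_nonpos (by positivity) hZ
  have hdisc' : (4*γ*(((4*(α-1)*(lam+1-α) - α*(α-2))/(2*(α-1)))*r^2
        + ((2*α*(α-1)*(lam+1-α) + α - 2*(α-1)^2)/(2*(α-1)))))^2
      ≤ 4*((s * ((4*(lam+1-α))*r^2 + ((α-2)*Real.sqrt (α-2)/(α-1))*r))
        * (4*s*γ^2*(((-((α-2)*(3*α-2)))/(2*(α-1)))*r^2 + ((α-2)*α/(4*(α-1)))*r))) := by
    nlinarith [mul_le_mul_of_nonneg_left hdisc (show (0:ℝ) ≤ 16*γ^2 by positivity)]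
  have hI1 := real_inner_le_norm (z (k+1) - z k) (v (k+1))
  have hIabs := abs_real_inner_le_norm (z (k+1) - z k) (v (k+1))
  have hI2 : -(‖z (k+1) - z k‖ * ‖v (k+1)‖) ≤ ⟪z (k+1) - z k, v (k+1)⟫ :=
    neg_le_of_abs_le hIabs
  have final := quad_nonpos
    (s * ((4*(lam+1-α))*r^2 + ((α-2)*Real.sqrt (α-2)/(α-1))*r))
    (4*γ*(((4*(α-1)*(lam+1-α) - α*(α-2))/(2*(α-1)))*r^2
        + ((2*α*(α-1)*(lam+1-α) + α - 2*(α-1)^2)/(2*(α-1)))))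
    (4*s*γ^2*(((-((α-2)*(3*α-2)))/(2*(α-1)))*r^2 + ((α-2)*α/(4*(α-1)))*r))
    ‖z (k+1) - z k‖ ‖v (k+1)‖ ⟪z (k+1) - z k, v (k+1)⟫
    hXlt hZle hdisc' (norm_nonneg _) (norm_nonneg _) hI1 hI2
  linarith [final]
end
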